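/- For all integers q ≥ 2 and n ≥ 1, the family 𝓖_q is n-cell implementable under scenario (◦∗) if and only if q ≤ n + 1. -/

import Mathlib

/-- The alphabet 𝔹• = {0, 1, ∗, •}. -/
inductive BB : Type
  | zero
  | one
  | star
  | reject
deriving DecidableEq

instance : Fintype BB :=
  ⟨{BB.zero, BB.one, BB.star, BB.reject}, fun x => by cases x <;> simp⟩

/-- The cell function T : 𝔹• × 𝔹• → 𝔹: T(u,ϑ) = 1 iff u = ∗, or ϑ = ∗,
or u,ϑ ∈ 𝔹 with u = ϑ. -/
def Tcell : BB → BB → Bool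
  | BB.star, _ => true
  | _, BB.star => true
  | BB.zero, BB.zero => true
  | BB.one, BB.one => true
  | _, _ => false

/-- The word-level function T(u,ϑ) = ⋀_{j<n} T(u_j, ϑ_j). -/
def Tword {n : ℕ} (u θ : Fin n → BB) : Bool :=
  decide (∀ j, Tcell (u j) (θ j) = true)

/-- The alphabet 𝔹 = {0,1} ⊆ 𝔹•. -/
def Bcirc : Set BB := {BB.zero, BB.one}

/-- The alphabet 𝔹∗ = {0,1,∗} ⊆ 𝔹•. -/
def Bstar : Set BB := {BB.zero, BB.one, BB.star}

/-- The full alphabet 𝔹•. -/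
def Bdot : Set BB := Set.univ

/-- A family Φ of functions {0,…,q−1} → 𝔹 is n-cell implementable under
scenario (A,B) if there are mappings u : {0,…,q−1} → A^n and ϑ : Φ → B^n
with f(x) = T(u(x), ϑ(f)) for all f ∈ Φ and x. -/
def Implementable (A B : Set BB) (n q : ℕ) (Φ : Set (Fin q → Bool)) : Prop :=
  ∃ u : Fin q → Fin n → BB, ∃ θ : (Fin q → Bool) → Fin n → BB,
    (∀ x j, u x j ∈ A) ∧ (∀ f ∈ Φ, ∀ j, θ f j ∈ B) ∧
    (∀ f ∈ Φ, ∀ x, f x = Tword (u x) (θ f))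

/-- The family 𝓔_q = { x ↦ [x = t] : t ∈ [q⟩ }. -/
def Eset (q : ℕ) : Set (Fin q → Bool) :=
  { f | ∃ t : Fin q, f = fun x => decide (x = t) }

/-- The family 𝓝_q = { x ↦ [x ≠ t] : t ∈ [q⟩ }. -/
def Nset (q : ℕ) : Set (Fin q → Bool) :=
  { f | ∃ t : Fin q, f = fun x => decide (x ≠ t) }

/-- The family 𝓖_q = { x ↦ [x ≥ t] : t ∈ [q⟩ }. -/
def Gset (q : ℕ) : Set (Fin q → Bool) :=
  { f | ∃ t : Fin q, f = fun x => decide (t ≤ x) }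

/-- The family 𝓛_q = { x ↦ [x ≤ t] : t ∈ [q⟩ }. -/
def Lset (q : ℕ) : Set (Fin q → Bool) :=
  { f | ∃ t : Fin q, f = fun x => decide (x ≤ t) }

/-!
If binary words `u x` realise every threshold `[t ≤ x]`, then for each of the `q - 1` nontrivial
thresholds `t + 1` some cell `j t` rejects `x = t`. Since a cell that accepts some binary letter
and rejects another holds exactly the accepted letter, column `j t` of `u` is constant on
`[t + 1, q)` and changes between `t` and `t + 1`; hence `t ↦ j t` is injective and `q - 1 ≤ n`.
Conversely, for `q ≤ n + 1` encode `x` by the thermometer word `1^x 0^(n-x)` and the threshold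
`t ≥ 1` by the word with `1` in cell `t - 1` and `∗` elsewhere.
-/

theorem Tword_eq_true_iff {n : ℕ} (u θ : Fin n → BB) :
    Tword u θ = true ↔ ∀ j, Tcell (u j) (θ j) = true := by
  simp [Tword]

theorem eq_of_Tcell_true_of_Tcell_false {a b c : BB} (ha : a ∈ Bcirc) (hc : c ∈ Bcirc)
    (h_true : Tcell a b = true) (h_false : Tcell c b = false) : b = a := by
  simp only [Bcirc, Set.mem_insert_iff, Set.mem_singleton_iff] at ha hc
  rcases ha with rfl | rfl <;> rcases hc with rfl | rfl <;> cases b <;> simp_all [Tcell]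

theorem implementable_range_iff {A B : Set BB} {n q : ℕ} {ι : Type*} (g : ι → Fin q → Bool) :
    Implementable A B n q (Set.range g) ↔
      ∃ u : Fin q → Fin n → BB, ∃ θ : ι → Fin n → BB,
        (∀ x j, u x j ∈ A) ∧ (∀ i j, θ i j ∈ B) ∧ ∀ i x, g i x = Tword (u x) (θ i) := by
  constructor
  · rintro ⟨u, θ, hu, hθ, h⟩
    exact ⟨u, θ ∘ g, hu, fun i => hθ _ ⟨i, rfl⟩, fun i => h _ ⟨i, rfl⟩⟩
  · classical
    rintro ⟨u, θ, hu, hθ, h⟩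
    refine ⟨u, fun f => if hf : ∃ i, g i = f then θ hf.choose else fun _ => BB.star,
      hu, ?_, ?_⟩
    · rintro f ⟨i, rfl⟩ j
      have hi : ∃ k, g k = g i := ⟨i, rfl⟩
      dsimp only
      rw [dif_pos hi]
      exact hθ _ j
    · rintro _ ⟨i, rfl⟩ x
      have hi : ∃ k, g k = g i := ⟨i, rfl⟩
      dsimp only
      rw [dif_pos hi, ← h, hi.choose_spec]

theorem Gset_eq_range (q : ℕ) : Gset q = Set.range fun t x : Fin q => decide (t ≤ x) := by
  ext f
  simp [Gset, eq_comm]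

theorem le_of_Tword_realises_thresholds {m n : ℕ} (u θ : Fin (m + 1) → Fin n → BB)
    (hu : ∀ x j, u x j ∈ Bcirc) (h : ∀ t x, decide (t ≤ x) = Tword (u x) (θ t)) : m ≤ n := by
  have h_true : ∀ t x, t ≤ x → ∀ j, Tcell (u x j) (θ t j) = true := fun t x htx =>
    (Tword_eq_true_iff _ _).1 (by rw [← h]; simpa using htx)
  have h_reject : ∀ t : Fin m, ∃ j, Tcell (u t.castSucc j) (θ t.succ j) = false := by
    intro t
    by_contra! hall
    have := (Tword_eq_true_iff _ _).2 fun j => by simpa using hall j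
    rw [← h, decide_eq_true_iff] at this
    exact absurd this (not_le.2 Fin.castSucc_lt_succ)
  choose J hJ using h_reject
  have h_col : ∀ t x, t.succ ≤ x → θ t.succ (J t) = u x (J t) := fun t x htx =>
    eq_of_Tcell_true_of_Tcell_false (hu _ _) (hu _ _) (h_true _ _ htx _) (hJ t)
  refine Fin.le_of_injective J (Function.Injective.of_lt_imp_ne fun t t' htt' hJJ => ?_)
  have h_same : u t'.castSucc (J t') = u t'.succ (J t') := by
    rw [← hJJ, ← h_col t _ (Fin.succ_le_castSucc_iff.2 htt'),
      ← h_col t _ (Fin.succ_le_succ_iff.2 htt'.le)]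
  have := hJ t'
  rw [h_same, h_true _ _ le_rfl] at this
  exact Bool.noConfusion this

def thermometerWord (n x : ℕ) : Fin n → BB := fun j => if j.val < x then BB.one else BB.zero

def thresholdTest (n t : ℕ) : Fin n → BB := fun j => if j.val + 1 = t then BB.one else BB.star

theorem thermometerWord_mem_Bcirc (n x : ℕ) (j : Fin n) : thermometerWord n x j ∈ Bcirc := by
  unfold thermometerWord; split_ifs <;> simp [Bcirc]

theorem thresholdTest_mem_Bstar (n t : ℕ) (j : Fin n) : thresholdTest n t j ∈ Bstar := by
  unfold thresholdTest; split_ifs <;> simp [Bstar]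

theorem Tword_thermometerWord_thresholdTest {n t : ℕ} (x : ℕ) (ht : t ≤ n) :
    Tword (thermometerWord n x) (thresholdTest n t) = decide (t ≤ x) := by
  have hcell : ∀ j : Fin n,
      Tcell (thermometerWord n x j) (thresholdTest n t j) = true ↔ (j.val + 1 = t → j.val < x) := by
    intro j
    unfold thermometerWord thresholdTest
    split_ifs <;> simp_all [Tcell]
  rw [Bool.eq_iff_iff, Tword_eq_true_iff, decide_eq_true_iff]
  simp only [hcell]
  constructor
  · intro hall
    rcases Nat.eq_zero_or_pos t with rfl | ht0
    · exact Nat.zero_le x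
    · have := hall ⟨t - 1, by omega⟩ (by simp only; omega)
      simp only at this
      omega
  · intro htx j hj
    omega

theorem Gset_implementable_circStar_general (q n : ℕ) :
    Implementable Bcirc Bstar n q (Gset q) ↔ q ≤ n + 1 := by
  rw [Gset_eq_range, implementable_range_iff]
  constructor
  · rintro ⟨u, θ, hu, -, h⟩
    cases q with
    | zero => omega
    | succ m => exact Nat.succ_le_succ (le_of_Tword_realises_thresholds u θ hu h)
  · intro hqn
    exact ⟨fun x => thermometerWord n x, fun t => thresholdTest n t,
      fun x => thermometerWord_mem_Bcirc n x, fun t => thresholdTest_mem_Bstar n t,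
      fun t x => (Tword_thermometerWord_thresholdTest x (by omega)).symm⟩

theorem Gset_implementable_circStar (q n : ℕ) (hq : 2 ≤ q) (hn : 1 ≤ n) :
    Implementable Bcirc Bstar n q (Gset q) ↔ q ≤ n + 1 :=
  Gset_implementable_circStar_general q n
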